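/- Let Y be a Young diagram of charge k having a convex corner at an i-coloured site, and let Y′ be obtained from Y by removing that corner. Then Y′ is again a Young diagram of charge k and, for every j ∈ I, cc_j(Y′) − cx_j(Y′) = (cc_j(Y) − cx_j(Y)) + a_{ji}. -/

import Mathlib

open scoped Classical

noncomputable section

/-- The base field `ℚ(q)`. -/
abbrev Kq : Type := RatFunc ℚ

/-- The indeterminate `q` of `ℚ(q)`. -/
def fq : Kq := RatFunc.X

/-- The generalized Cartan matrix of affine type `C_n^{(1)}` (meaningful for `i, j ≤ n`). -/
def cartan (n i j : ℕ) : ℤ :=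
  if i = j then 2
  else if i = 1 ∧ j = 0 then -2
  else if i = n - 1 ∧ j = n then -2
  else if i + 1 = j ∨ j + 1 = i then -1
  else 0

/-- The symmetrizing integers: `s 0 = s n = 2`, otherwise `1`. -/
def sg (n i : ℕ) : ℕ := if i = 0 ∨ i = n then 2 else 1

/-- `q_i = q ^ s_i`. -/
def qi (n i : ℕ) : Kq := fq ^ sg n i

/-- The colour of the site `(l, z)`: the unique `i ∈ {0,…,n}` with
`l + z ≡ i` or `-i (mod 2n)`. -/
def colour (n l : ℕ) (z : ℤ) : ℕ :=
  let r := (((l : ℤ) + z) % (2 * (n : ℤ))).toNat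
  if r ≤ n then r else 2 * n - r

/-- A Young diagram of charge `k`: a nondecreasing sequence of integers eventually
equal to `k`. -/
structure YD (n k : ℕ) where
  y : ℕ → ℤ
  mono : Monotone y
  eventually : ∃ N, ∀ l, N ≤ l → y l = (k : ℤ)

variable {n k : ℕ}

/-- `Y` has a concave corner at site `(l, z)`. -/
def ConcaveAt (Y : YD n k) (l : ℕ) (z : ℤ) : Prop :=
  (l = 0 ∧ z = Y.y 0) ∨ (∃ m, l = m + 1 ∧ Y.y m < Y.y (m + 1) ∧ z = Y.y (m + 1))

/-- `Y` has a convex corner at site `(l, z)`. -/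
def ConvexAt (Y : YD n k) (l : ℕ) (z : ℤ) : Prop :=
  ∃ m, l = m + 1 ∧ Y.y m < Y.y (m + 1) ∧ z = Y.y m

/-- The number of `i`-coloured concave corners of `Y`. -/
def cc (i : ℕ) (Y : YD n k) : ℕ :=
  {p : ℕ × ℤ | ConcaveAt Y p.1 p.2 ∧ colour n p.1 p.2 = i}.ncard

/-- The number of `i`-coloured convex corners of `Y`. -/
def cx (i : ℕ) (Y : YD n k) : ℕ :=
  {p : ℕ × ℤ | ConvexAt Y p.1 p.2 ∧ colour n p.1 p.2 = i}.ncard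

/-- The number of `j`-coloured boxes of `Y`. -/
def boxes (j : ℕ) (Y : YD n k) : ℕ :=
  {p : ℕ × ℤ | Y.y p.1 < p.2 ∧ p.2 ≤ (k : ℤ) ∧ colour n p.1 p.2 = j}.ncard

/-- Removing the convex corner of `Y` at site `(l, z)`. -/
def removeY (Y : YD n k) (l : ℕ) (z : ℤ) (h : ConvexAt Y l z) : YD n k where
  y := Function.update Y.y (l - 1) (Y.y (l - 1) + 1)
  mono := by
    obtain ⟨m, rfl, hlt, -⟩ := h
    simp only [Nat.add_sub_cancel]
    apply monotone_nat_of_le_succ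
    intro r
    rcases eq_or_ne r m with rfl | h1
    · rw [Function.update_self, Function.update_of_ne (by omega)]
      omega
    · rcases eq_or_ne (r + 1) m with h2 | h2
      · rw [Function.update_of_ne h1, h2, Function.update_self]
        have hm := Y.mono (Nat.le_add_right r 1)
        rw [h2] at hm
        omega
      · rw [Function.update_of_ne h1, Function.update_of_ne h2]
        exact Y.mono (Nat.le_add_right r 1)
  eventually := by
    obtain ⟨N, hN⟩ := Y.eventually
    exact ⟨N + l + 1, fun r hr => by
      rw [Function.update_of_ne (by omega)]
      exact hN r (by omega)⟩

/-- Adding a box at the concave corner of `Y` at site `(l, z)`. -/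
def addY (Y : YD n k) (l : ℕ) (z : ℤ) (h : ConcaveAt Y l z) : YD n k where
  y := Function.update Y.y l (Y.y l - 1)
  mono := by
    apply monotone_nat_of_le_succ
    intro r
    rcases eq_or_ne r l with rfl | h1
    · rw [Function.update_self, Function.update_of_ne (by omega)]
      have := Y.mono (Nat.le_add_right r 1)
      omega
    · rcases eq_or_ne (r + 1) l with h2 | h2
      · rw [Function.update_of_ne h1, h2, Function.update_self]
        rcases h with ⟨hl0, -⟩ | ⟨m, hm, hlt, -⟩
        · omega
        · have hrm : r = m := by omega
          subst hrm
          rw [← hm] at hlt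
          omega
      · rw [Function.update_of_ne h1, Function.update_of_ne h2]
        exact Y.mono (Nat.le_add_right r 1)
  eventually := by
    obtain ⟨N, hN⟩ := Y.eventually
    exact ⟨N + l + 1, fun r hr => by
      rw [Function.update_of_ne (by omega)]
      exact hN r (by omega)⟩

/-- The Fock space `F(Λ_k)`: the `ℚ(q)`-vector space with basis the Young diagrams of
charge `k`. -/
abbrev Fock (n k : ℕ) := YD n k →₀ Kq

/-- The basis vector of the Fock space corresponding to a Young diagram. -/
def fockB (Y : YD n k) : Fock n k := Finsupp.single Y 1

/-- The linear operator on the Fock space determined by its values on basis vectors. -/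
def lift (g : YD n k → Fock n k) : Fock n k →ₗ[Kq] Fock n k :=
  Finsupp.lsum Kq fun Y => LinearMap.toSpanSingleton Kq (Fock n k) (g Y)

/-- The single-site operator `E_{(l,z)}`. -/
def Esite (n k : ℕ) (l : ℕ) (z : ℤ) : Fock n k →ₗ[Kq] Fock n k :=
  lift fun Y => if h : ConvexAt Y l z then fockB (removeY Y l z h) else 0

/-- The single-site operator `F_{(l,z)}`. -/
def Fsite (n k : ℕ) (l : ℕ) (z : ℤ) : Fock n k →ₗ[Kq] Fock n k :=
  lift fun Y => if h : ConcaveAt Y l z then fockB (addY Y l z h) else 0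

/-- `a(i,l,z,Y)`: the number of `i`-coloured concave corners at sites greater than `(l,z)`
minus the number of `i`-coloured convex corners at sites greater than `(l,z)`. -/
def aExp (i l : ℕ) (z : ℤ) (Y : YD n k) : ℤ :=
  ({p : ℕ × ℤ | ConcaveAt Y p.1 p.2 ∧ colour n p.1 p.2 = i ∧
      (l : ℤ) + z < (p.1 : ℤ) + p.2}.ncard : ℤ)
  - ({p : ℕ × ℤ | ConvexAt Y p.1 p.2 ∧ colour n p.1 p.2 = i ∧
      (l : ℤ) + z < (p.1 : ℤ) + p.2}.ncard : ℤ)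

/-- `b(i,l,z,Y)`: the number of `i`-coloured convex corners at sites smaller than `(l,z)`
minus the number of `i`-coloured concave corners at sites smaller than `(l,z)`. -/
def bExp (i l : ℕ) (z : ℤ) (Y : YD n k) : ℤ :=
  ({p : ℕ × ℤ | ConvexAt Y p.1 p.2 ∧ colour n p.1 p.2 = i ∧
      (p.1 : ℤ) + p.2 < (l : ℤ) + z}.ncard : ℤ)
  - ({p : ℕ × ℤ | ConcaveAt Y p.1 p.2 ∧ colour n p.1 p.2 = i ∧
      (p.1 : ℤ) + p.2 < (l : ℤ) + z}.ncard : ℤ)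

/-- The Chevalley-type operator `E_i` on the Fock space: on a basis diagram `Y`,
`E_i Y = Σ_{(l,z) : i-coloured convex corner of Y} q_i^{a(i,l,z,Y)} • (Y with corner removed)`,
where the power of `q_i` records the product of the `T⁺` factors at larger `i`-coloured sites. -/
def Ei (n k i : ℕ) : Fock n k →ₗ[Kq] Fock n k :=
  lift fun Y => ∑ᶠ p : ℕ × ℤ,
    if h : ConvexAt Y p.1 p.2 ∧ colour n p.1 p.2 = i then
      (qi n i ^ aExp i p.1 p.2 Y) • fockB (removeY Y p.1 p.2 h.1)
    else 0

/-- The Chevalley-type operator `F_i` on the Fock space: on a basis diagram `Y`,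
`F_i Y = Σ_{(l,z) : i-coloured concave corner of Y} q_i^{b(i,l,z,Y)} • (Y with box added)`,
where the power of `q_i` records the product of the `T⁻` factors at smaller `i`-coloured sites. -/
def Fi (n k i : ℕ) : Fock n k →ₗ[Kq] Fock n k :=
  lift fun Y => ∑ᶠ p : ℕ × ℤ,
    if h : ConcaveAt Y p.1 p.2 ∧ colour n p.1 p.2 = i then
      (qi n i ^ bExp i p.1 p.2 Y) • fockB (addY Y p.1 p.2 h.1)
    else 0

/-- The operator `T_i⁺ = ∏_{(l,z) of colour i} T⁺_{(l,z)}`: it multiplies a basis diagram `Y`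
by `q_i^{cc_i(Y) - cx_i(Y)}`. -/
def Tplus (n k i : ℕ) : Fock n k →ₗ[Kq] Fock n k :=
  lift fun Y => (qi n i ^ ((cc i Y : ℤ) - (cx i Y : ℤ))) • fockB Y

/-- The operator `T_i⁻ = ∏_{(l,z) of colour i} T⁻_{(l,z)}`: it multiplies a basis diagram `Y`
by `q_i^{-(cc_i(Y) - cx_i(Y))}`. -/
def Tminus (n k i : ℕ) : Fock n k →ₗ[Kq] Fock n k :=
  lift fun Y => (qi n i ^ (-((cc i Y : ℤ) - (cx i Y : ℤ)))) • fockB Y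

/-- The operator `T_d`: it multiplies a basis diagram `Y` by `q^{-b_0(Y)}`. -/
def Td (n k : ℕ) : Fock n k →ₗ[Kq] Fock n k :=
  lift fun Y => (fq ^ (-(boxes 0 Y : ℤ))) • fockB Y

/-- The quantum integer `[m]_x = (x^m - x^{-m})/(x - x^{-1})`. -/
def qInt (x : Kq) (m : ℕ) : Kq := (x ^ m - x⁻¹ ^ m) / (x - x⁻¹)

/-- The quantum factorial `[m]_x!`. -/
def qFact (x : Kq) : ℕ → Kq
  | 0 => 1
  | m + 1 => qInt x (m + 1) * qFact x m

/-- The quantum binomial coefficient `[m choose r]_x`. -/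
def qBinom (x : Kq) (m r : ℕ) : Kq := qFact x m / (qFact x r * qFact x (m - r))

/-- The empty Young diagram `φ_k` of charge `k`. -/
def phiYD (n k : ℕ) : YD n k :=
  ⟨fun _ => (k : ℤ), monotone_const, ⟨0, fun _ _ => rfl⟩⟩

/-- `Y` has an (either concave or convex) corner at site `(l, z)`. -/
def CornerAt (Y : YD n k) (l : ℕ) (z : ℤ) : Prop := ConcaveAt Y l z ∨ ConvexAt Y l z

/-- `L` lists the sites of the `i`-coloured corners of `Y` in strictly decreasing order. -/
def Enumerates (Y : YD n k) (i : ℕ) (L : List (ℕ × ℤ)) : Prop :=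
  (∀ p : ℕ × ℤ, p ∈ L ↔ (CornerAt Y p.1 p.2 ∧ colour n p.1 p.2 = i)) ∧
  L.Chain' (fun p q => (q.1 : ℤ) + q.2 < (p.1 : ℤ) + p.2)

/-- The `i`-signature of `Y` along the list `L` of its `i`-coloured corner sites:
each site is tagged `true` if the corner there is convex (`σ = 1`) and `false`
if it is concave (`σ = 0`). -/
def sigL (Y : YD n k) (L : List (ℕ × ℤ)) : List ((ℕ × ℤ) × Bool) :=
  L.map fun p => (p, if ConvexAt Y p.1 p.2 then true else false)

/-- Reduction of a signature: repeatedly delete adjacent pairs `(0, 1)` (a concave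
entry immediately followed by a convex entry); the surviving entries are those
indexed by `J(σ)`. -/
def reduceSig : List ((ℕ × ℤ) × Bool) → List ((ℕ × ℤ) × Bool) :=
  List.foldr (fun x acc =>
    if x.2 = false ∧ acc.head?.map Prod.snd = some true then acc.tail else x :: acc) []

/-- The site at which `f̃_i` adds a box: the corner of the smallest index `r ∈ J(σ)`
with `σ_r = 0` (`none` if there is no such index, i.e. `f̃_i Y = 0`). -/
def ftildeSite (Y : YD n k) (i : ℕ) (L : List (ℕ × ℤ)) : Option (ℕ × ℤ) :=
  ((reduceSig (sigL Y L)).find? (fun x => !x.2)).map Prod.fst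

/-- The site at which `ẽ_i` removes a box: the corner of the largest index `r ∈ J(σ)`
with `σ_r = 1` (`none` if there is no such index, i.e. `ẽ_i Y = 0`). -/
def etildeSite (Y : YD n k) (i : ℕ) (L : List (ℕ × ℤ)) : Option (ℕ × ℤ) :=
  (((reduceSig (sigL Y L)).filter (fun x => x.2)).getLast?).map Prod.fst

/-!
Read column by column, `cc_j Y - cx_j Y` is a sum over `l` of
`[colour (l, y_l) = j] - [colour (l + 1, y_l) = j]` plus a boundary term, whose `l`-th summand
depends on `y_l` alone. Removing the convex corner at `(m + 1, y_m)` only raises `y_m` by one, and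
colours depend only on `l + y`, so the sum changes by `2 [i = j] - [c(s - 1) = j] - [c(s + 1) = j]`,
where `s` is the content of the removed corner and `c` the colour of a content. Folding `ℤ` onto
`{0, …, n}` modulo `2n` sends the two neighbours of a content of colour `i` to the neighbours of
`i` in the Dynkin diagram of `C_n^{(1)}`, with both landing on `1` (resp. `n - 1`) when `i = 0`
(resp. `i = n`); this is exactly `a_{ji}`.
-/

theorem Int.add_one_emod_eq_ite {s M : ℤ} (hM : 0 < M) :
    (s + 1) % M = if s % M + 1 = M then 0 else s % M + 1 := by
  have hr₀ := Int.emod_nonneg s hM.ne'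
  have hr₁ := Int.emod_lt_of_pos s hM
  split_ifs with h
  · rw [show s + 1 = M * (s / M + 1) by linarith [Int.emod_def s M], Int.mul_emod_right]
  · rw [show s + 1 = (s % M + 1) + M * (s / M) by linarith [Int.emod_def s M],
      Int.add_mul_emod_self_left]
    exact Int.emod_eq_of_lt (by omega) (by omega)

theorem Int.sub_one_emod_eq_ite {s M : ℤ} (hM : 0 < M) :
    (s - 1) % M = if s % M = 0 then M - 1 else s % M - 1 := by
  have hr₀ := Int.emod_nonneg s hM.ne'
  have hr₁ := Int.emod_lt_of_pos s hM
  split_ifs with h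
  · rw [show s - 1 = (M - 1) + M * (s / M - 1) by linarith [Int.emod_def s M],
      Int.add_mul_emod_self_left]
    exact Int.emod_eq_of_lt (by omega) (by omega)
  · rw [show s - 1 = (s % M - 1) + M * (s / M) by linarith [Int.emod_def s M],
      Int.add_mul_emod_self_left]
    exact Int.emod_eq_of_lt (by omega) (by omega)

theorem colour_congr {l l' : ℕ} {z z' : ℤ} (h : (l : ℤ) + z = l' + z') :
    colour n l z = colour n l' z' := by
  simp only [colour, h]

theorem colour_eq_emod (hn : 0 < n) (l : ℕ) (z : ℤ) :
    (colour n l z : ℤ)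
      = if (l + z) % (2 * n) ≤ n then (l + z) % (2 * n) else 2 * n - (l + z) % (2 * n) := by
  have hM : (0 : ℤ) < 2 * n := by positivity
  have hr₀ := Int.emod_nonneg ((l : ℤ) + z) hM.ne'
  have hr₁ := Int.emod_lt_of_pos ((l : ℤ) + z) hM
  simp only [colour]
  split_ifs <;> omega

theorem colour_neighbours (hn : 0 < n) (l : ℕ) (z : ℤ) :
    (colour n (l + 1) z = 0 ∧ colour n l z = 1 ∧ colour n (l + 1) (z + 1) = 1) ∨
    (colour n (l + 1) z = n ∧ colour n l z = n - 1 ∧ colour n (l + 1) (z + 1) = n - 1) ∨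
    (0 < colour n (l + 1) z ∧ colour n (l + 1) z < n ∧
      (colour n l z = colour n (l + 1) z - 1 ∧
          colour n (l + 1) (z + 1) = colour n (l + 1) z + 1 ∨
        colour n l z = colour n (l + 1) z + 1 ∧
          colour n (l + 1) (z + 1) = colour n (l + 1) z - 1)) := by
  have hM : (0 : ℤ) < 2 * n := by positivity
  have hi := colour_eq_emod hn (l + 1) z
  have hpred := colour_eq_emod hn l z
  have hsucc := colour_eq_emod hn (l + 1) (z + 1)
  rw [show (l : ℤ) + z = (l + 1 : ℕ) + z - 1 by push_cast; ring,
    Int.sub_one_emod_eq_ite hM] at hpred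
  rw [show ((l + 1 : ℕ) : ℤ) + (z + 1) = (l + 1 : ℕ) + z + 1 by ring,
    Int.add_one_emod_eq_ite hM] at hsucc
  have hr₀ := Int.emod_nonneg (((l + 1 : ℕ) : ℤ) + z) hM.ne'
  have hr₁ := Int.emod_lt_of_pos (((l + 1 : ℕ) : ℤ) + z) hM
  generalize (((l + 1 : ℕ) : ℤ) + z) % (2 * n) = r at *
  generalize colour n (l + 1) z = i at *
  generalize colour n l z = a at *
  generalize colour n (l + 1) (z + 1) = b at *
  split_ifs at hi hpred hsucc <;> omega

theorem cartan_colour_eq (hn : 0 < n) {j : ℕ} (hj : j ≤ n) (l : ℕ) (z : ℤ) :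
    cartan n j (colour n (l + 1) z)
      = 2 * (if colour n (l + 1) z = j then 1 else 0)
        - (if colour n l z = j then 1 else 0)
        - (if colour n (l + 1) (z + 1) = j then 1 else 0) := by
  have h := colour_neighbours hn l z
  generalize colour n (l + 1) z = i at *
  generalize colour n l z = a at *
  generalize colour n (l + 1) (z + 1) = b at *
  unfold cartan
  rcases h with ⟨rfl, rfl, rfl⟩ | ⟨rfl, rfl, rfl⟩ |
      ⟨hi₀, hin, ⟨rfl, rfl⟩ | ⟨rfl, rfl⟩⟩ <;>
    split_ifs <;> first | omega | simp_all

theorem Set.ncard_eq_card_filter_of_subset_image {ι α : Type*} {g : ι → α}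
    (hg : Function.Injective g) {S : Set α} {s : Finset ι} (hS : S ⊆ g '' s) :
    S.ncard = (s.filter fun x => g x ∈ S).card := by
  have hS' : S = ((s.filter fun x => g x ∈ S).image g : Set α) := by
    ext a
    simp only [Finset.coe_image, Finset.coe_filter, Set.mem_image, Set.mem_ofPred_eq]
    constructor
    · intro ha
      obtain ⟨x, hx, rfl⟩ := hS ha
      exact ⟨x, ⟨hx, ha⟩, rfl⟩
    · rintro ⟨x, ⟨-, hx⟩, rfl⟩
      exact hx
  rw [congrArg Set.ncard hS', Set.ncard_coe_finset, Finset.card_image_of_injective _ hg]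

theorem Finset.sum_apply_update_of_mem {ι β M : Type*} [DecidableEq ι] [AddCommGroup M]
    {s : Finset ι} {m : ι} (hm : m ∈ s) (f : ι → β → M) (g : ι → β) (v : β) :
    ∑ x ∈ s, f x (Function.update g m v x) = ∑ x ∈ s, f x (g x) + (f m v - f m (g m)) := by
  simp only [Function.apply_update f g, Finset.sum_update_of_mem hm,
    Finset.sum_eq_add_sum_sdiff_singleton_of_mem hm fun x => f x (g x)]
  abel

section Corners

variable {Y : YD n k} {l : ℕ} {z : ℤ}

theorem concaveAt_zero_iff : ConcaveAt Y 0 z ↔ z = Y.y 0 := by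
  simp [ConcaveAt]

theorem concaveAt_succ_iff : ConcaveAt Y (l + 1) z ↔ Y.y l < Y.y (l + 1) ∧ z = Y.y (l + 1) := by
  simp [ConcaveAt]

theorem convexAt_succ_iff : ConvexAt Y (l + 1) z ↔ Y.y l < Y.y (l + 1) ∧ z = Y.y l := by
  simp [ConvexAt]

theorem YD.lt_of_y_lt_y_succ {N : ℕ} (hN : ∀ l, N ≤ l → Y.y l = k)
    (h : Y.y l < Y.y (l + 1)) : l < N := by
  by_contra hl
  have h₁ := hN l (by omega)
  have h₂ := hN (l + 1) (by omega)
  omega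

theorem cc_eq_sum {N : ℕ} (hN : ∀ l, N ≤ l → Y.y l = k) (j : ℕ) :
    (cc j Y : ℤ) = (if colour n 0 (Y.y 0) = j then 1 else 0) +
      ∑ l ∈ Finset.range N,
        if Y.y l < Y.y (l + 1) ∧ colour n (l + 1) (Y.y (l + 1)) = j then 1 else 0 := by
  have hsub : {p : ℕ × ℤ | ConcaveAt Y p.1 p.2 ∧ colour n p.1 p.2 = j}
      ⊆ (fun l => (l, Y.y l)) '' Finset.range (N + 1) := by
    rintro ⟨_ | l, z⟩ ⟨hp, -⟩
    · rw [concaveAt_zero_iff] at hp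
      exact ⟨0, by simp, by simp_all⟩
    · rw [concaveAt_succ_iff] at hp
      refine ⟨l + 1, ?_, by simp_all⟩
      simpa using YD.lt_of_y_lt_y_succ hN hp.1
  rw [cc, Set.ncard_eq_card_filter_of_subset_image (fun _ _ h => congrArg Prod.fst h) hsub,
    Finset.card_filter, Finset.sum_range_succ']
  simp [concaveAt_zero_iff, concaveAt_succ_iff, add_comm]

theorem cx_eq_sum {N : ℕ} (hN : ∀ l, N ≤ l → Y.y l = k) (j : ℕ) :
    (cx j Y : ℤ) = ∑ l ∈ Finset.range N,
        if Y.y l < Y.y (l + 1) ∧ colour n (l + 1) (Y.y l) = j then 1 else 0 := by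
  have hsub : {p : ℕ × ℤ | ConvexAt Y p.1 p.2 ∧ colour n p.1 p.2 = j}
      ⊆ (fun l => (l + 1, Y.y l)) '' Finset.range N := by
    rintro ⟨l, z⟩ ⟨⟨l, rfl, hlt, rfl⟩, -⟩
    exact ⟨l, by simpa using YD.lt_of_y_lt_y_succ hN hlt, rfl⟩
  rw [cx, Set.ncard_eq_card_filter_of_subset_image
      (fun _ _ h => Nat.succ_injective (congrArg Prod.fst h)) hsub, Finset.card_filter]
  simp [convexAt_succ_iff]

theorem cc_sub_cx_eq_sum {N : ℕ} (hN : ∀ l, N ≤ l → Y.y l = k) (j : ℕ) :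
    (cc j Y : ℤ) - cx j Y
      = ∑ l ∈ Finset.range N, ((if colour n l (Y.y l) = j then 1 else 0)
          - (if colour n (l + 1) (Y.y l) = j then 1 else 0))
        + if colour n N (Y.y N) = j then 1 else 0 := by
  have hstep : ∀ l, ((if Y.y l < Y.y (l + 1) ∧ colour n (l + 1) (Y.y (l + 1)) = j then 1 else 0)
      - (if Y.y l < Y.y (l + 1) ∧ colour n (l + 1) (Y.y l) = j then 1 else 0) : ℤ)
      = (if colour n (l + 1) (Y.y (l + 1)) = j then 1 else 0)
        - (if colour n (l + 1) (Y.y l) = j then 1 else 0) := by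
    intro l
    -- without a corner in column `l + 1` (`y_l = y_{l+1}`) the two indicators cancel anyway
    rcases (Y.mono l.le_succ).lt_or_eq with hlt | heq
    · simp only [hlt, true_and]
    · simp only [heq, lt_irrefl, false_and, if_false, sub_self]
  rw [cc_eq_sum hN, cx_eq_sum hN, add_sub_assoc, ← Finset.sum_sub_distrib,
    Finset.sum_congr rfl fun l _ => hstep l, Finset.sum_sub_distrib, Finset.sum_sub_distrib]
  have hshift := Finset.sum_range_succ' (fun l => (if colour n l (Y.y l) = j then 1 else 0 : ℤ)) N
  rw [Finset.sum_range_succ] at hshift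
  linarith

end Corners

theorem removeY_y (Y : YD n k) (m : ℕ) (z : ℤ) (h : ConvexAt Y (m + 1) z) :
    (removeY Y (m + 1) z h).y = Function.update Y.y m (Y.y m + 1) :=
  rfl

theorem ccx_remove_general (n : ℕ) (hn : 2 ≤ n) (k : ℕ) (Y : YD n k)
    (l : ℕ) (z : ℤ) (i : ℕ) (hcol : colour n l z = i)
    (h : ConvexAt Y l z) (j : ℕ) (hj : j ≤ n) :
    (cc j (removeY Y l z h) : ℤ) - (cx j (removeY Y l z h) : ℤ)
      = ((cc j Y : ℤ) - (cx j Y : ℤ)) + cartan n j i := by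
  obtain ⟨m, rfl, -, rfl⟩ := id h
  obtain ⟨N, hN⟩ := Y.eventually
  have hY : ∀ l, N + m + 1 ≤ l → Y.y l = k := fun l hl => hN l (by omega)
  have hY' : ∀ l, N + m + 1 ≤ l → (removeY Y (m + 1) (Y.y m) h).y l = k := fun l hl => by
    rw [removeY_y, Function.update_of_ne (by omega), hY l hl]
  rw [cc_sub_cx_eq_sum hY', cc_sub_cx_eq_sum hY, removeY_y,
    Finset.sum_apply_update_of_mem (Finset.mem_range.2 (by omega : m < N + m + 1))
      (fun l v => (if colour n l v = j then 1 else 0 : ℤ)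
        - if colour n (l + 1) v = j then 1 else 0),
    Function.update_of_ne (by omega), ← hcol, cartan_colour_eq (by omega) hj,
    colour_congr (show (m : ℤ) + (Y.y m + 1) = (m + 1 : ℕ) + Y.y m by push_cast; ring)]
  ring

/-- Removing a convex corner at an `i`-coloured site from a Young diagram `Y`
of charge `k` yields a Young diagram `Y'` of charge `k` (this is `removeY Y l z h : YD n k`)
with `cc_j(Y') - cx_j(Y') = (cc_j(Y) - cx_j(Y)) + a_{ji}` for every `j ∈ I`. -/
theorem ccx_remove (n : ℕ) (hn : 2 ≤ n) (k : ℕ) (hk : k ≤ n) (Y : YD n k)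
    (l : ℕ) (z : ℤ) (i : ℕ) (hi : i ≤ n) (hcol : colour n l z = i)
    (h : ConvexAt Y l z) (j : ℕ) (hj : j ≤ n) :
    (cc j (removeY Y l z h) : ℤ) - (cx j (removeY Y l z h) : ℤ)
      = ((cc j Y : ℤ) - (cx j Y : ℤ)) + cartan n j i :=
  ccx_remove_general n hn k Y l z i hcol h j hj

end
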